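/- Let L > 0, κ > 0, let w, w' : [0,L] → ℝ be continuous, and let μ be a finite Borel measure on [0,L] with total mass η := μ([0,L]) satisfying 0 < η ≤ 1. Let p* and p*' be, respectively, the unique fixed points of Ψ_{w,μ} and Ψ_{w',μ} in C([0,L]). Then sup_{x∈[0,L]} |p*(x) − p*'(x)| ≤ ((1+κ)/2)·sup_{x∈[0,L]} |w(x) − w'(x)|. -/

import Mathlib

/-!
Writing `η = μ.real univ` and `c = 1 - 1/(1+κη)`, the map `(p, w) ↦ Ψ_{w,μ}(p)` is Lipschitz with
constant `c` in `p` and `1/2` in `w`: the average is `1`-Lipschitz for the sup norm, and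
`t ↦ t - (t - u)⁺/2` is `1`-Lipschitz in `t` and `1/2`-Lipschitz in `u`. At the two fixed points
this gives `‖p* - p*'‖ ≤ c ‖p* - p*'‖ + ‖w - w'‖/2`, i.e.
`‖p* - p*'‖ ≤ (1+κη)/2 · ‖w - w'‖ ≤ (1+κ)/2 · ‖w - w'‖`.
-/

open MeasureTheory

/-- The market-price map `Ψ_{w,μ}(p)(x) = a + c·p̄ − (1/2)(a + c·p̄ − w(x))⁺`,
with `η = μ([0,L])`, `a = 1/(1+κη)`, `c = 1 − a` and `p̄ = (1/η)∫ p dμ`. -/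
noncomputable def Psi (L κ : ℝ) (w : C(Set.Icc (0:ℝ) L, ℝ))
    (μ : Measure (Set.Icc (0:ℝ) L)) (p : C(Set.Icc (0:ℝ) L, ℝ))
    (x : Set.Icc (0:ℝ) L) : ℝ :=
  let η : ℝ := (μ Set.univ).toReal
  let a : ℝ := 1 / (1 + κ * η)
  let c : ℝ := 1 - a
  let pbar : ℝ := (1 / η) * ∫ y, p y ∂μ
  a + c * pbar - (1 / 2) * max (a + c * pbar - w x) 0

lemma abs_sub_half_max_sub_le (t t' u u' : ℝ) :
    |(t - (1 / 2) * max (t - u) 0) - (t' - (1 / 2) * max (t' - u') 0)| ≤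
      |t - t'| + (1 / 2) * |u - u'| := by
  rcases le_total (t - u) 0 with h | h <;> rcases le_total (t' - u') 0 with h' | h' <;>
    simp only [max_eq_right, max_eq_left, h, h'] <;>
    rw [abs_sub_le_iff] <;> constructor <;>
    linarith [le_abs_self (t - t'), neg_abs_le (t - t'), le_abs_self (u - u'), neg_abs_le (u - u')]

lemma norm_average_le_of_norm_le_const {α E : Type*} [MeasurableSpace α] [NormedAddCommGroup E]
    [NormedSpace ℝ E] {μ : Measure α} [IsFiniteMeasure μ] {f : α → E} {C : ℝ} (hC : 0 ≤ C)
    (h : ∀ᵐ x ∂μ, ‖f x‖ ≤ C) : ‖⨍ x, f x ∂μ‖ ≤ C := by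
  rw [average_eq, norm_smul, norm_inv, Real.norm_of_nonneg measureReal_nonneg]
  calc (μ.real Set.univ)⁻¹ * ‖∫ x, f x ∂μ‖
      ≤ (μ.real Set.univ)⁻¹ * (C * μ.real Set.univ) := by
        gcongr
        exact norm_integral_le_of_norm_le_const h
    _ = C * ((μ.real Set.univ)⁻¹ * μ.real Set.univ) := by ring
    _ ≤ C := mul_le_of_le_one_right hC inv_mul_le_one

lemma ContinuousMap.abs_average_sub_average_le {X : Type*} [TopologicalSpace X] [CompactSpace X]
    [MeasurableSpace X] [OpensMeasurableSpace X] (μ : Measure X) [IsFiniteMeasure μ]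
    (f g : C(X, ℝ)) : |⨍ x, f x ∂μ - ⨍ x, g x ∂μ| ≤ ‖f - g‖ := by
  have hint : ∀ h : C(X, ℝ), Integrable h μ := fun h =>
    h.continuous.integrable_of_hasCompactSupport (HasCompactSupport.of_compactSpace _)
  have hsub : ⨍ x, f x ∂μ - ⨍ x, g x ∂μ = ⨍ x, (f - g) x ∂μ := by
    simp only [average_eq, ← smul_sub, ContinuousMap.sub_apply, integral_sub (hint f) (hint g)]
  rw [hsub, ← Real.norm_eq_abs]
  exact norm_average_le_of_norm_le_const (norm_nonneg _)
    (Filter.Eventually.of_forall (ContinuousMap.norm_coe_le_norm _))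

lemma ContinuousMap.iSup_abs_sub_eq_norm_sub {X : Type*} [TopologicalSpace X] [CompactSpace X]
    (f g : C(X, ℝ)) : ⨆ x, |f x - g x| = ‖f - g‖ := by
  simp only [ContinuousMap.norm_eq_iSup_norm, ContinuousMap.sub_apply, Real.norm_eq_abs]

lemma Psi_eq_average (L κ : ℝ) (w : C(Set.Icc (0:ℝ) L, ℝ)) (μ : Measure (Set.Icc (0:ℝ) L))
    (p : C(Set.Icc (0:ℝ) L, ℝ)) (x : Set.Icc (0:ℝ) L) :
    Psi L κ w μ p x =
      (1 / (1 + κ * μ.real Set.univ) + (1 - 1 / (1 + κ * μ.real Set.univ)) * ⨍ y, p y ∂μ) -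
        (1 / 2) * max (1 / (1 + κ * μ.real Set.univ) +
          (1 - 1 / (1 + κ * μ.real Set.univ)) * ⨍ y, p y ∂μ - w x) 0 := by
  simp only [Psi, average_eq, measureReal_def, smul_eq_mul, one_div]

lemma abs_Psi_sub_Psi_le {L κ : ℝ} (hκ : 0 ≤ κ) (μ : Measure (Set.Icc (0:ℝ) L))
    [IsFiniteMeasure μ] (w w' p p' : C(Set.Icc (0:ℝ) L, ℝ)) (x : Set.Icc (0:ℝ) L) :
    |Psi L κ w μ p x - Psi L κ w' μ p' x| ≤
      (1 - 1 / (1 + κ * μ.real Set.univ)) * ‖p - p'‖ + (1 / 2) * |w x - w' x| := by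
  rw [Psi_eq_average, Psi_eq_average]
  set c := 1 - 1 / (1 + κ * μ.real Set.univ)
  have h1 : 1 ≤ 1 + κ * μ.real Set.univ := le_add_of_nonneg_right (mul_nonneg hκ measureReal_nonneg)
  have hc : 0 ≤ c := sub_nonneg.2 (div_le_one_of_le₀ h1 (zero_le_one.trans h1))
  refine (abs_sub_half_max_sub_le _ _ _ _).trans (add_le_add_left ?_ _)
  rw [add_sub_add_left_eq_sub, ← mul_sub, abs_mul, abs_of_nonneg hc]
  exact mul_le_mul_of_nonneg_left (ContinuousMap.abs_average_sub_average_le μ p p') hc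

theorem Psi_fixedPoint_stability_in_w_general (L κ : ℝ) (hκ : 0 < κ)
    (w w' : C(Set.Icc (0:ℝ) L, ℝ))
    (μ : Measure (Set.Icc (0:ℝ) L)) [IsFiniteMeasure μ]
    (hη1 : (μ Set.univ).toReal ≤ 1)
    (pstar pstar' : C(Set.Icc (0:ℝ) L, ℝ))
    (hfix : ∀ x : Set.Icc (0:ℝ) L, Psi L κ w μ pstar x = pstar x)
    (hfix' : ∀ x : Set.Icc (0:ℝ) L, Psi L κ w' μ pstar' x = pstar' x) :
    (⨆ x : Set.Icc (0:ℝ) L, |pstar x - pstar' x|) ≤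
      ((1 + κ) / 2) * ⨆ x : Set.Icc (0:ℝ) L, |w x - w' x| := by
  rw [ContinuousMap.iSup_abs_sub_eq_norm_sub, ContinuousMap.iSup_abs_sub_eq_norm_sub]
  rw [← measureReal_def] at hη1
  set k := 1 + κ * μ.real Set.univ
  have hk1 : 1 ≤ k := le_add_of_nonneg_right (mul_nonneg hκ.le measureReal_nonneg)
  have hk : 0 < k := zero_lt_one.trans_le hk1
  have hc : 0 ≤ 1 - 1 / k := sub_nonneg.2 (div_le_one_of_le₀ hk1 hk.le)
  have hkκ : k ≤ 1 + κ := add_le_add_right (mul_le_of_le_one_right hκ.le hη1) 1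
  have hself : ‖pstar - pstar'‖ ≤ (1 - 1 / k) * ‖pstar - pstar'‖ + (1 / 2) * ‖w - w'‖ := by
    have hrhs : 0 ≤ (1 - 1 / k) * ‖pstar - pstar'‖ + (1 / 2) * ‖w - w'‖ := by positivity
    refine (ContinuousMap.norm_le _ hrhs).2 fun x => ?_
    have hwx : |w x - w' x| ≤ ‖w - w'‖ := by simpa using ContinuousMap.norm_coe_le_norm (w - w') x
    rw [ContinuousMap.sub_apply, Real.norm_eq_abs, ← hfix x, ← hfix' x]
    exact (abs_Psi_sub_Psi_le hκ.le μ w w' pstar pstar' x).trans (by gcongr)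
  calc ‖pstar - pstar'‖ = k * (1 / k * ‖pstar - pstar'‖) := by field_simp
    _ ≤ k * ((1 / 2) * ‖w - w'‖) := mul_le_mul_of_nonneg_left (by linarith) hk.le
    _ = k / 2 * ‖w - w'‖ := by ring
    _ ≤ (1 + κ) / 2 * ‖w - w'‖ := by gcongr

/-- Stability of the market price in `w`:
`‖p* − p*'‖_∞ ≤ ((1+κ)/2)·‖w − w'‖_∞`. -/
theorem Psi_fixedPoint_stability_in_w (L κ : ℝ) (hL : 0 < L) (hκ : 0 < κ)
    (w w' : C(Set.Icc (0:ℝ) L, ℝ))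
    (μ : Measure (Set.Icc (0:ℝ) L)) [IsFiniteMeasure μ]
    (hη : 0 < (μ Set.univ).toReal) (hη1 : (μ Set.univ).toReal ≤ 1)
    (pstar pstar' : C(Set.Icc (0:ℝ) L, ℝ))
    (hfix : ∀ x : Set.Icc (0:ℝ) L, Psi L κ w μ pstar x = pstar x)
    (hfix' : ∀ x : Set.Icc (0:ℝ) L, Psi L κ w' μ pstar' x = pstar' x) :
    (⨆ x : Set.Icc (0:ℝ) L, |pstar x - pstar' x|) ≤
      ((1 + κ) / 2) * ⨆ x : Set.Icc (0:ℝ) L, |w x - w' x| :=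
  Psi_fixedPoint_stability_in_w_general L κ hκ w w' μ hη1 pstar pstar' hfix hfix'
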